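/- arXiv:2203.08018 — 2 statements merged into one kernel-verified Lean document; each statement's English description precedes it below -/
import Mathlib

section
/- Let V be a commutative unital ring, 𝔪 an idempotent ideal with 𝔪̃ = 𝔪 ⊗_V 𝔪, and A a commutative V-algebra. Then 𝔪̃ ⊗_V Hom_V(𝔪̃, 𝔪̃ ⊗_V A) ≅ 𝔪̃ ⊗_V A and Hom_V(𝔪̃, 𝔪̃ ⊗_V A) ≅ Hom_V(𝔪̃, A) as A-modules. -/
/-!
Write `ν : 𝔪̃ → V` for multiplication and `μ_M : 𝔪̃ ⊗ M → M` for the action. In `𝔪̃` one has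
`ν x • y = ν y • x`, hence `ν x • w = x ⊗ μ_M w` in `𝔪̃ ⊗ M`, so the kernel of every `μ_M` is killed
by `ν(𝔪̃) = 𝔪`. As `T ⊗ 𝔪 = 0` whenever `𝔪 T = 0`, tensoring the surjection `μ_𝔪` with `𝔪` gives a
bijection, which is `μ_𝔪̃`; so `μ_{𝔪̃ ⊗ M}` is bijective for every `M`, and a linear map out of `𝔪̃`
is determined by its values on the elements `ν x • y`. Postcomposition with `μ_A` is then inverted
by `h ↦ (id ⊗ h) ∘ μ_𝔪̃⁻¹`, and whenever `μ_X` is bijective, evaluation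
`𝔪̃ ⊗ Hom(𝔪̃, X) → X` is inverted by `(id ⊗ coev) ∘ μ_X⁻¹`, where `coev x = (z ↦ ν z • x)`.
-/

open TensorProduct

variable {V : Type*} [CommRing V]

/-- 𝔪̃ = 𝔪 ⊗[V] 𝔪. -/
abbrev mTilde (𝔪 : Ideal V) : Type _ := ↥𝔪 ⊗[V] ↥𝔪

/-- The multiplication map `𝔪 ⊗[V] 𝔪 → 𝔪`. -/
noncomputable def mulMapI (𝔪 : Ideal V) : mTilde 𝔪 →ₗ[V] ↥𝔪 :=
  (Submodule.inclusion Ideal.mul_le_right).comp (Submodule.mulMap' 𝔪 𝔪)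

/-- `ν : 𝔪̃ → V`, `a ⊗ b ↦ a * b`. -/
noncomputable def nuMap (𝔪 : Ideal V) : mTilde 𝔪 →ₗ[V] V :=
  𝔪.subtype.comp (mulMapI 𝔪)

/-- The action map `𝔪̃ ⊗[V] M → M`, `(a ⊗ b) ⊗ x ↦ (a * b) • x`. -/
noncomputable def muTilde (𝔪 : Ideal V) (M : Type*) [AddCommGroup M] [Module V M] :
    mTilde 𝔪 ⊗[V] M →ₗ[V] M :=
  TensorProduct.lift ((LinearMap.lsmul V M).comp (nuMap 𝔪))

/-- The evaluation map `𝔪̃ ⊗[V] Hom_V(𝔪̃, X) → X`, `a ⊗ f ↦ f a`. -/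
noncomputable def evMap (𝔪 : Ideal V) (X : Type*) [AddCommGroup X] [Module V X] :
    mTilde 𝔪 ⊗[V] (mTilde 𝔪 →ₗ[V] X) →ₗ[V] X :=
  TensorProduct.lift (LinearMap.id (M := mTilde 𝔪 →ₗ[V] X)).flip

namespace mTilde

variable (𝔪 : Ideal V)

@[simp] lemma nuMap_tmul (a b : 𝔪) : nuMap 𝔪 (a ⊗ₜ b) = (a : V) * b := rfl

@[simp] lemma muTilde_tmul {M : Type*} [AddCommGroup M] [Module V M] (x : mTilde 𝔪) (m : M) :
    muTilde 𝔪 M (x ⊗ₜ m) = nuMap 𝔪 x • m := rfl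

@[simp] lemma evMap_tmul {X : Type*} [AddCommGroup X] [Module V X] (x : mTilde 𝔪)
    (f : mTilde 𝔪 →ₗ[V] X) : evMap 𝔪 X (x ⊗ₜ f) = f x := rfl

lemma nuMap_smul_comm (x y : mTilde 𝔪) : nuMap 𝔪 x • y = nuMap 𝔪 y • x := by
  have smul_swap (a c : 𝔪) : (a : V) • c = (c : V) • a := Subtype.ext (mul_comm _ _)
  have : (LinearMap.lsmul V (mTilde 𝔪)).comp (nuMap 𝔪) =
      ((LinearMap.lsmul V (mTilde 𝔪)).comp (nuMap 𝔪)).flip := by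
    ext a b c d
    simp only [AlgebraTensorModule.curry_apply, LinearMap.flip_apply, curry_apply,
      LinearMap.coe_restrictScalars, LinearMap.comp_apply, LinearMap.lsmul_apply, nuMap_tmul]
    rw [mul_smul, ← tmul_smul, smul_tmul', mul_smul, ← tmul_smul, smul_tmul', smul_swap a,
      smul_swap b]
  exact LinearMap.congr_fun₂ this x y

lemma mulMapI_surjective (hm : 𝔪 * 𝔪 = 𝔪) : Function.Surjective (mulMapI 𝔪) := by
  rintro ⟨v, hv⟩
  obtain ⟨z, hz⟩ := Submodule.mulMap'_surjective 𝔪 𝔪 ⟨v, hm.symm ▸ hv⟩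
  exact ⟨z, Subtype.ext (congrArg Subtype.val hz :)⟩

lemma nuMap_smul_eq_tmul_muTilde {M : Type*} [AddCommGroup M] [Module V M] (x : mTilde 𝔪)
    (w : mTilde 𝔪 ⊗[V] M) : nuMap 𝔪 x • w = x ⊗ₜ muTilde 𝔪 M w := by
  induction w using TensorProduct.induction_on with
  | zero => simp
  | tmul y m => rw [muTilde_tmul, smul_tmul', nuMap_smul_comm, smul_tmul]
  | add w₁ w₂ h₁ h₂ => rw [smul_add, h₁, h₂, map_add, tmul_add]

lemma smul_eq_zero_of_muTilde_eq_zero (hm : 𝔪 * 𝔪 = 𝔪) {M : Type*} [AddCommGroup M]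
    [Module V M] {w : mTilde 𝔪 ⊗[V] M} (hw : muTilde 𝔪 M w = 0) {s : V} (hs : s ∈ 𝔪) :
    s • w = 0 := by
  obtain ⟨x, hx⟩ := mulMapI_surjective 𝔪 hm ⟨s, hs⟩
  have : nuMap 𝔪 x = s := congrArg Subtype.val hx
  rw [← this, nuMap_smul_eq_tmul_muTilde, hw, tmul_zero]

lemma subsingleton_tensor_of_smul_eq_zero (hm : 𝔪 * 𝔪 = 𝔪) {T : Type*} [AddCommMonoid T]
    [Module V T] (hT : ∀ t : T, ∀ s ∈ 𝔪, s • t = 0) : Subsingleton (T ⊗[V] 𝔪) := by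
  refine subsingleton_of_forall_eq 0 fun w ↦ ?_
  induction w using TensorProduct.induction_on with
  | zero => rfl
  | tmul t a =>
    obtain ⟨z, rfl⟩ := mulMapI_surjective 𝔪 hm a
    induction z using TensorProduct.induction_on with
    | zero => simp
    | tmul b c =>
      have : mulMapI 𝔪 (b ⊗ₜ c) = (b : V) • c := rfl
      rw [this, tmul_smul, smul_tmul', hT t b b.2, zero_tmul]
    | add z₁ z₂ h₁ h₂ => rw [map_add, tmul_add, h₁, h₂, add_zero]
  | add w₁ w₂ h₁ h₂ => rw [h₁, h₂, add_zero]

lemma rTensor_bijective_of_ker_smul (hm : 𝔪 * 𝔪 = 𝔪) {P Q : Type*} [AddCommGroup P]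
    [Module V P] [AddCommGroup Q] [Module V Q] {f : P →ₗ[V] Q} (hf : Function.Surjective f)
    (hker : ∀ k, f k = 0 → ∀ s ∈ 𝔪, s • k = 0) : Function.Bijective (f.rTensor 𝔪) := by
  refine ⟨?_, LinearMap.rTensor_surjective 𝔪 hf⟩
  have : Subsingleton (LinearMap.ker f ⊗[V] 𝔪) :=
    subsingleton_tensor_of_smul_eq_zero 𝔪 hm fun k s hs ↦
      Subtype.ext (hker k (LinearMap.mem_ker.mp k.2) s hs)
  rw [← LinearMap.ker_eq_bot, LinearMap.ker_eq_bot']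
  intro z hz
  obtain ⟨w, rfl⟩ := (rTensor_exact 𝔪 (LinearMap.exact_subtype_ker_map f) hf z).mp hz
  rw [Subsingleton.elim w 0, map_zero]

lemma muTilde_ideal_eq : muTilde 𝔪 𝔪 = mulMapI 𝔪 ∘ₗ (mulMapI 𝔪).rTensor 𝔪 := by
  ext a b c
  simp [mulMapI, mul_assoc]

lemma muTilde_ideal_surjective (hm : 𝔪 * 𝔪 = 𝔪) : Function.Surjective (muTilde 𝔪 𝔪) := by
  rw [muTilde_ideal_eq]
  exact (mulMapI_surjective 𝔪 hm).comp (LinearMap.rTensor_surjective 𝔪 (mulMapI_surjective 𝔪 hm))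

lemma muTilde_tensor_eq (N M : Type*) [AddCommGroup N] [Module V N] [AddCommGroup M]
    [Module V M] : muTilde 𝔪 (N ⊗[V] M) =
      (muTilde 𝔪 N).rTensor M ∘ₗ (TensorProduct.assoc V (mTilde 𝔪) N M).symm.toLinearMap :=
  TensorProduct.ext_threefold' fun _ n m ↦ (smul_tmul' _ n m).symm

lemma muTilde_mTilde_bijective (hm : 𝔪 * 𝔪 = 𝔪) : Function.Bijective (muTilde 𝔪 (mTilde 𝔪)) := by
  rw [muTilde_tensor_eq, LinearMap.coe_comp]
  exact (rTensor_bijective_of_ker_smul 𝔪 hm (P := mTilde 𝔪 ⊗[V] 𝔪)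
    (muTilde_ideal_surjective 𝔪 hm) fun _ hw _ ↦ smul_eq_zero_of_muTilde_eq_zero 𝔪 hm hw).comp
    (LinearEquiv.bijective _)

lemma muTilde_tensor_bijective {N : Type*} [AddCommGroup N] [Module V N]
    (hN : Function.Bijective (muTilde 𝔪 N)) (M : Type*) [AddCommGroup M] [Module V M] :
    Function.Bijective (muTilde 𝔪 (N ⊗[V] M)) := by
  rw [muTilde_tensor_eq, LinearMap.coe_comp]
  exact ((LinearEquiv.ofBijective _ hN).rTensor M).bijective.comp (LinearEquiv.bijective _)

lemma muTilde_comp_lTensor {M N : Type*} [AddCommGroup M] [Module V M] [AddCommGroup N]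
    [Module V N] (f : M →ₗ[V] N) : muTilde 𝔪 N ∘ₗ f.lTensor (mTilde 𝔪) = f ∘ₗ muTilde 𝔪 M :=
  TensorProduct.ext' fun x m ↦ by simp

variable {𝔪} {M N : Type*} [AddCommGroup M] [Module V M] [AddCommMonoid N] [Module V N]

lemma linearMap_ext (hm : 𝔪 * 𝔪 = 𝔪) {f g : mTilde 𝔪 →ₗ[V] N}
    (h : ∀ x y, f (nuMap 𝔪 x • y) = g (nuMap 𝔪 x • y)) : f = g := by
  have : f ∘ₗ muTilde 𝔪 (mTilde 𝔪) = g ∘ₗ muTilde 𝔪 (mTilde 𝔪) := TensorProduct.ext' h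
  exact (LinearMap.cancel_right (muTilde_mTilde_bijective 𝔪 hm).surjective).mp this

lemma llcomp_muTilde_bijective (hm : 𝔪 * 𝔪 = 𝔪) :
    Function.Bijective (LinearMap.llcomp (σ₁₂ := RingHom.id V) (σ₁₃ := RingHom.id V) V
      (mTilde 𝔪) (mTilde 𝔪 ⊗[V] M) M (muTilde 𝔪 M)) := by
  refine ⟨fun f g hfg ↦ linearMap_ext hm fun x y ↦ ?_, fun h ↦ ?_⟩
  · rw [map_smul, map_smul, nuMap_smul_eq_tmul_muTilde, nuMap_smul_eq_tmul_muTilde]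
    exact congrArg _ (LinearMap.congr_fun hfg y)
  · let e := LinearEquiv.ofBijective _ (muTilde_mTilde_bijective 𝔪 hm)
    refine ⟨h.lTensor (mTilde 𝔪) ∘ₗ e.symm.toLinearMap, ?_⟩
    rw [LinearMap.llcomp_apply', ← LinearMap.comp_assoc, muTilde_comp_lTensor,
      LinearMap.comp_assoc]
    ext u
    simp [e]

lemma evMap_bijective_of_muTilde_bijective (hm : 𝔪 * 𝔪 = 𝔪) {X : Type*} [AddCommGroup X]
    [Module V X] (hX : Function.Bijective (muTilde 𝔪 X)) : Function.Bijective (evMap 𝔪 X) := by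
  let e := LinearEquiv.ofBijective (muTilde 𝔪 X) hX
  let coev : X →ₗ[V] mTilde 𝔪 →ₗ[V] X := ((LinearMap.lsmul V X).comp (nuMap 𝔪)).flip
  let β := coev.lTensor (mTilde 𝔪) ∘ₗ e.symm.toLinearMap
  have β_smul (a : mTilde 𝔪) (x : X) : β (nuMap 𝔪 a • x) = a ⊗ₜ coev x := by
    simp [β, ← muTilde_tmul, e]
  have ev_β : evMap 𝔪 X ∘ₗ β = LinearMap.id := by
    have : evMap 𝔪 X ∘ₗ coev.lTensor (mTilde 𝔪) = muTilde 𝔪 X := TensorProduct.ext' fun _ _ ↦ rfl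
    rw [← LinearMap.comp_assoc, this]
    exact LinearMap.ext e.apply_symm_apply
  have β_ev : β ∘ₗ evMap 𝔪 X = LinearMap.id := by
    refine TensorProduct.ext' fun w f ↦ LinearMap.congr_fun (linearMap_ext hm
      (f := (β ∘ₗ evMap 𝔪 X) ∘ₗ (TensorProduct.mk V _ _).flip f)
      (g := (TensorProduct.mk V _ _).flip f) fun a b ↦ ?_) w
    simp only [LinearMap.comp_apply, LinearMap.flip_apply, TensorProduct.mk_apply, evMap_tmul]
    calc β (f (nuMap 𝔪 a • b))
        = a ⊗ₜ[V] coev (f b) := by rw [map_smul, β_smul]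
      _ = a ⊗ₜ[V] (nuMap 𝔪 b • f) := by
        congr 1
        refine LinearMap.ext fun z ↦ ?_
        simp only [coev, LinearMap.flip_apply, LinearMap.comp_apply, LinearMap.lsmul_apply,
          LinearMap.smul_apply, ← map_smul, nuMap_smul_comm]
      _ = (nuMap 𝔪 a • b) ⊗ₜ[V] f := by
        rw [← muTilde_tmul, ← nuMap_smul_eq_tmul_muTilde, smul_tmul']
  exact Function.bijective_iff_has_inverse.mpr
    ⟨β, LinearMap.congr_fun β_ev, LinearMap.congr_fun ev_β⟩

end mTilde

open mTilde in
/-- For a commutative V-algebra A: 𝔪̃ ⊗ Hom(𝔪̃, 𝔪̃ ⊗ A) ≅ 𝔪̃ ⊗ A (via evaluation),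
and Hom(𝔪̃, 𝔪̃ ⊗ A) ≅ Hom(𝔪̃, A) (via postcomposition with the almost isomorphism
μ : 𝔪̃ ⊗ A → A). -/
theorem stmt14 {V : Type u} [CommRing V] (𝔪 : Ideal V) (hm : 𝔪 * 𝔪 = 𝔪)
    (A : Type u) [CommRing A] [Algebra V A] :
    Function.Bijective (evMap 𝔪 (mTilde 𝔪 ⊗[V] A)) ∧
    Function.Bijective
      (LinearMap.llcomp (σ₁₂ := RingHom.id V) (σ₁₃ := RingHom.id V) V (mTilde 𝔪) (mTilde 𝔪 ⊗[V] A) A (muTilde 𝔪 A)) :=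
  ⟨evMap_bijective_of_muTilde_bijective hm
      (muTilde_tensor_bijective 𝔪 (muTilde_mTilde_bijective 𝔪 hm) A),
    llcomp_muTilde_bijective hm⟩
end

section
/- Let V be a commutative unital ring and 𝔪 an idempotent ideal, with 𝔪̃ = 𝔪 ⊗_V 𝔪. For a non-unital commutative V-algebra B in the essential image of B' ↦ 𝔪̃ ⊗_V B' (B' unital), the canonical ring map B_{!!} := coker(𝔪̃ → V ⊕ B) → V ⊕ B / (diagonal 𝔪̃) induces an isomorphism 𝔪̃ ⊗_V B_{!!} ≅ 𝔪̃ ⊗_V B. -/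
open TensorProduct

variable {V : Type*} [CommRing V]

/-- `B = 𝔪̃ ⊗[V] B'`, a non-unital algebra in the essential image of `𝔪̃ ⊗_V (-)`. -/
def BB (𝔪 : Ideal V) (B' : Type*) [CommRing B'] [Algebra V B'] : Type _ :=
  mTilde 𝔪 ⊗[V] B'

noncomputable instance (𝔪 : Ideal V) (B' : Type*) [CommRing B'] [Algebra V B'] :
    AddCommGroup (BB 𝔪 B') :=
  inferInstanceAs (AddCommGroup (mTilde 𝔪 ⊗[V] B'))

noncomputable instance (𝔪 : Ideal V) (B' : Type*) [CommRing B'] [Algebra V B'] :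
    Module V (BB 𝔪 B') :=
  inferInstanceAs (Module V (mTilde 𝔪 ⊗[V] B'))

/-- The map `a ↦ a ⊗ (-1) = -(a ⊗ 1_{B'}) : 𝔪̃ → B`. -/
noncomputable def negIotaMap (𝔪 : Ideal V) (B' : Type*) [CommRing B'] [Algebra V B'] :
    mTilde 𝔪 →ₗ[V] BB 𝔪 B' :=
  (TensorProduct.mk V (mTilde 𝔪) B').flip (-1)

/-- The "diagonal" map `𝔪̃ → V ⊕ B`, `a ↦ (ν a, -(a ⊗ 1))`, whose cokernel is the
unitalization `B₍!!₎ = V ⊕_𝔪̃ B`. -/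
noncomputable def dMap (𝔪 : Ideal V) (B' : Type*) [CommRing B'] [Algebra V B'] :
    mTilde 𝔪 →ₗ[V] V × BB 𝔪 B' :=
  LinearMap.prod (nuMap 𝔪) (negIotaMap 𝔪 B')

set_option maxHeartbeats 1000000
set_option synthInstance.maxHeartbeats 1000000

variable (𝔪 : Ideal V)

lemma mulMapI_tmul (a b : ↥𝔪) : mulMapI 𝔪 (a ⊗ₜ[V] b) = (a : V) • b :=
  Subtype.ext rfl

lemma nuMap_tmul (a b : ↥𝔪) : nuMap 𝔪 (a ⊗ₜ[V] b) = (a : V) * (b : V) := rfl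

lemma smul_eq_tmul_mulMapI (c : ↥𝔪) (z : mTilde 𝔪) :
    (c : V) • z = c ⊗ₜ[V] (mulMapI 𝔪 z) := by
  induction z using TensorProduct.induction_on with
  | zero => simp
  | tmul a b =>
      rw [mulMapI_tmul, smul_tmul']
      have : (c : V) • a = (a : V) • c := Subtype.ext (mul_comm _ _)
      rw [this, smul_tmul]
  | add u v hu hv => rw [smul_add, map_add, tmul_add, hu, hv]

lemma smul_ker_eq_zero (c : ↥𝔪) {k : mTilde 𝔪} (hk : mulMapI 𝔪 k = 0) :
    (c : V) • k = 0 := by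
  rw [smul_eq_tmul_mulMapI, hk, tmul_zero]

lemma mulMapI_surjective (hm : 𝔪 * 𝔪 = 𝔪) : Function.Surjective (mulMapI 𝔪) := by
  intro m
  have h1 : (m : V) ∈ 𝔪 * 𝔪 := by rw [hm]; exact m.2
  obtain ⟨w, hw⟩ := Submodule.mulMap'_surjective 𝔪 𝔪 ⟨(m : V), h1⟩
  refine ⟨w, ?_⟩
  have : (mulMapI 𝔪 w : V) = ((Submodule.mulMap' 𝔪 𝔪 w : V)) := rfl
  exact Subtype.ext (by rw [this, hw])

lemma mem_span_smul (hm : 𝔪 * 𝔪 = 𝔪) (q : ↥𝔪) :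
    q ∈ Submodule.span V {w : ↥𝔪 | ∃ c y : ↥𝔪, w = (c : V) • y} := by
  obtain ⟨w, rfl⟩ := mulMapI_surjective 𝔪 hm q
  induction w using TensorProduct.induction_on with
  | zero => rw [map_zero]; exact zero_mem _
  | tmul a b => rw [mulMapI_tmul]; exact Submodule.subset_span ⟨a, b, rfl⟩
  | add u v hu hv => rw [map_add]; exact add_mem hu hv

lemma mem_span_smul' (hm : 𝔪 * 𝔪 = 𝔪) (z : mTilde 𝔪) :
    z ∈ Submodule.span V {w : mTilde 𝔪 | ∃ (c : ↥𝔪) (y : mTilde 𝔪), w = (c : V) • y} := by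
  induction z using TensorProduct.induction_on with
  | zero => exact zero_mem _
  | add u v hu hv => exact add_mem hu hv
  | tmul p q =>
      have h1 := Submodule.mem_map_of_mem (f := TensorProduct.mk V ↥𝔪 ↥𝔪 p)
        (mem_span_smul 𝔪 hm q)
      rw [Submodule.map_span] at h1
      refine Submodule.span_le.mpr ?_ h1
      rintro _ ⟨w, ⟨c, y, rfl⟩, rfl⟩
      rw [map_smul (TensorProduct.mk V ↥𝔪 ↥𝔪 p) ((c : V)) y]
      exact Submodule.subset_span ⟨c, p ⊗ₜ[V] y, rfl⟩

lemma bij_of_lTensor_ker_zero {R M N P : Type*} [CommRing R] [AddCommGroup M]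
    [AddCommGroup N] [AddCommGroup P] [Module R M] [Module R N] [Module R P]
    (g : N →ₗ[R] P) (hg : Function.Surjective g)
    (h0 : LinearMap.lTensor M (LinearMap.ker g).subtype = 0) :
    Function.Bijective (LinearMap.lTensor M g) := by
  have hex : Function.Exact ⇑(LinearMap.lTensor M (LinearMap.ker g).subtype)
      ⇑(LinearMap.lTensor M g) :=
    lTensor_exact M (LinearMap.exact_subtype_ker_map g) hg
  have hker : LinearMap.ker (LinearMap.lTensor M g) = ⊥ := by
    rw [hex.linearMap_ker_eq, h0, LinearMap.range_zero]
  constructor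
  · intro x y hxy
    have hx : x - y ∈ LinearMap.ker (LinearMap.lTensor M g) := by
      rw [LinearMap.mem_ker, map_sub, hxy, sub_self]
    rw [hker, Submodule.mem_bot] at hx
    exact sub_eq_zero.mp hx
  · exact LinearMap.lTensor_surjective M hg

lemma bij_lTensor_mulMapI (hm : 𝔪 * 𝔪 = 𝔪) (M : Type*) [AddCommGroup M] [Module V M]
    (hM : ∀ m : M, m ∈ Submodule.span V {w : M | ∃ (c : ↥𝔪) (y : M), w = (c : V) • y}) :
    Function.Bijective (LinearMap.lTensor M (mulMapI 𝔪)) := by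
  apply bij_of_lTensor_ker_zero (mulMapI 𝔪) (mulMapI_surjective 𝔪 hm)
  apply TensorProduct.ext'
  intro m k
  rw [LinearMap.lTensor_tmul, LinearMap.zero_apply]
  have h1 := Submodule.mem_map_of_mem
    (f := (TensorProduct.mk V M (mTilde 𝔪)).flip ((k : mTilde 𝔪))) (hM m)
  rw [Submodule.map_span] at h1
  have h2 : Submodule.span V ((⇑((TensorProduct.mk V M (mTilde 𝔪)).flip
      ((k : mTilde 𝔪)))) '' {w : M | ∃ (c : ↥𝔪) (y : M), w = (c : V) • y}) ≤ ⊥ := by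
    refine Submodule.span_le.mpr ?_
    rintro _ ⟨w, ⟨c, y, rfl⟩, rfl⟩
    have : ((TensorProduct.mk V M (mTilde 𝔪)).flip ((k : mTilde 𝔪))) ((c : V) • y)
        = ((c : V) • y) ⊗ₜ[V] ((k : mTilde 𝔪)) := rfl
    rw [SetLike.mem_coe, Submodule.mem_bot, this, smul_tmul,
      smul_ker_eq_zero 𝔪 c k.2, tmul_zero]
  simpa using h2 h1

lemma shuffle (x1 x2 a1 a2 : ↥𝔪) :
    (x1 ⊗ₜ[V] a1) ⊗ₜ[V] ((a2 : V) • x2) =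
      (x1 ⊗ₜ[V] x2) ⊗ₜ[V] ((a1 : V) • a2) := by
  have h1 : (a2 : V) • x2 = (x2 : V) • a2 := Subtype.ext (mul_comm _ _)
  have h2 : (x2 : V) • a1 = (a1 : V) • x2 := Subtype.ext (mul_comm _ _)
  calc (x1 ⊗ₜ[V] a1) ⊗ₜ[V] ((a2 : V) • x2)
      = (x1 ⊗ₜ[V] a1) ⊗ₜ[V] ((x2 : V) • a2) := by rw [h1]
    _ = ((x2 : V) • (x1 ⊗ₜ[V] a1)) ⊗ₜ[V] a2 := by rw [← smul_tmul]
    _ = (x1 ⊗ₜ[V] ((x2 : V) • a1)) ⊗ₜ[V] a2 := by rw [← tmul_smul]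
    _ = (x1 ⊗ₜ[V] ((a1 : V) • x2)) ⊗ₜ[V] a2 := by rw [h2]
    _ = ((a1 : V) • (x1 ⊗ₜ[V] x2)) ⊗ₜ[V] a2 := by rw [tmul_smul]
    _ = (x1 ⊗ₜ[V] x2) ⊗ₜ[V] ((a1 : V) • a2) := by rw [smul_tmul]

noncomputable def eqvT (hm : 𝔪 * 𝔪 = 𝔪) :
    (mTilde 𝔪 ⊗[V] mTilde 𝔪) ≃ₗ[V] mTilde 𝔪 ⊗[V] ↥𝔪 :=
  LinearEquiv.ofBijective _ (bij_lTensor_mulMapI 𝔪 hm (mTilde 𝔪) (mem_span_smul' 𝔪 hm))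

noncomputable def eqvM (hm : 𝔪 * 𝔪 = 𝔪) :
    (↥𝔪 ⊗[V] mTilde 𝔪) ≃ₗ[V] ↥𝔪 ⊗[V] ↥𝔪 :=
  LinearEquiv.ofBijective _ (bij_lTensor_mulMapI 𝔪 hm ↥𝔪 (mem_span_smul 𝔪 hm))

lemma eqvT_apply (hm : 𝔪 * 𝔪 = 𝔪) (z : mTilde 𝔪 ⊗[V] mTilde 𝔪) :
    eqvT 𝔪 hm z = LinearMap.lTensor (mTilde 𝔪) (mulMapI 𝔪) z := rfl

lemma eqvM_apply (hm : 𝔪 * 𝔪 = 𝔪) (z : ↥𝔪 ⊗[V] mTilde 𝔪) :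
    eqvM 𝔪 hm z = LinearMap.lTensor ↥𝔪 (mulMapI 𝔪) z := rfl

noncomputable def deltaMap (hm : 𝔪 * 𝔪 = 𝔪) :
    mTilde 𝔪 →ₗ[V] mTilde 𝔪 ⊗[V] mTilde 𝔪 :=
  (eqvT 𝔪 hm).symm.toLinearMap ∘ₗ
    (TensorProduct.assoc V ↥𝔪 ↥𝔪 ↥𝔪).symm.toLinearMap ∘ₗ
      (eqvM 𝔪 hm).symm.toLinearMap

lemma deltaMap_prop (hm : 𝔪 * 𝔪 = 𝔪) (a x : mTilde 𝔪) :
    deltaMap 𝔪 hm ((nuMap 𝔪 a) • x) = x ⊗ₜ[V] a := by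
  induction a using TensorProduct.induction_on with
  | zero => rw [map_zero, zero_smul, map_zero, tmul_zero]
  | add a b ha hb => rw [map_add, add_smul, map_add, ha, hb, tmul_add]
  | tmul a1 a2 =>
      induction x using TensorProduct.induction_on with
      | zero => rw [smul_zero, map_zero, zero_tmul]
      | add u v hu hv => rw [smul_add, map_add, hu, hv, add_tmul]
      | tmul x1 x2 =>
          have hnu : nuMap 𝔪 (a1 ⊗ₜ[V] a2) = (a1 : V) * (a2 : V) := rfl
          rw [hnu]
          show (eqvT 𝔪 hm).symm ((TensorProduct.assoc V ↥𝔪 ↥𝔪 ↥𝔪).symm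
            ((eqvM 𝔪 hm).symm (((a1 : V) * (a2 : V)) • (x1 ⊗ₜ[V] x2)))) = _
          have step1 : (eqvM 𝔪 hm).symm (((a1 : V) * (a2 : V)) • (x1 ⊗ₜ[V] x2)) =
              x1 ⊗ₜ[V] (a1 ⊗ₜ[V] ((a2 : V) • x2)) := by
            rw [LinearEquiv.symm_apply_eq, eqvM_apply, LinearMap.lTensor_tmul,
              mulMapI_tmul, smul_smul, tmul_smul]
          rw [step1, TensorProduct.assoc_symm_tmul, shuffle]
          rw [LinearEquiv.symm_apply_eq, eqvT_apply, LinearMap.lTensor_tmul, mulMapI_tmul]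

lemma mem_span_nusmul (hm : 𝔪 * 𝔪 = 𝔪) (z : mTilde 𝔪) :
    z ∈ Submodule.span V
      {w : mTilde 𝔪 | ∃ a x' : mTilde 𝔪, w = (nuMap 𝔪 a) • x'} := by
  induction z using TensorProduct.induction_on with
  | zero => exact zero_mem _
  | add u v hu hv => exact add_mem hu hv
  | tmul p q =>
      obtain ⟨w, rfl⟩ := mulMapI_surjective 𝔪 hm q
      induction w using TensorProduct.induction_on with
      | zero => rw [map_zero, tmul_zero]; exact zero_mem _
      | add u v hu hv => rw [map_add, tmul_add]; exact add_mem hu hv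
      | tmul s t =>
          rw [mulMapI_tmul, tmul_smul]
          obtain ⟨w2, rfl⟩ := mulMapI_surjective 𝔪 hm s
          induction w2 using TensorProduct.induction_on with
          | zero => rw [map_zero, ZeroMemClass.coe_zero, zero_smul]; exact zero_mem _
          | add u2 v2 hu2 hv2 =>
              rw [map_add, Submodule.coe_add, add_smul]; exact add_mem hu2 hv2
          | tmul a b =>
              refine Submodule.subset_span ⟨a ⊗ₜ[V] b, p ⊗ₜ[V] t, ?_⟩
              rfl


set_option maxHeartbeats 4000000 in
/-- For B = 𝔪̃ ⊗ B' in the essential image of 𝔪̃ ⊗_V (unital algebra), the canonical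
map B → B₍!!₎ = coker(𝔪̃ → V ⊕ B) induces an isomorphism 𝔪̃ ⊗_V B ≅ 𝔪̃ ⊗_V B₍!!₎. -/
theorem stmt15 {V : Type u} [CommRing V] (𝔪 : Ideal V) (hm : 𝔪 * 𝔪 = 𝔪)
    (B' : Type u) [CommRing B'] [Algebra V B'] :
    Function.Bijective (LinearMap.lTensor (mTilde 𝔪)
      ((LinearMap.range (dMap 𝔪 B')).mkQ.comp
        (LinearMap.inr V V (BB 𝔪 B')))) := by
  set R : Submodule V (V × BB 𝔪 B') := LinearMap.range (dMap 𝔪 B') with hR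
  set F : mTilde 𝔪 ⊗[V] BB 𝔪 B' →ₗ[V] mTilde 𝔪 ⊗[V] ((V × BB 𝔪 B') ⧸ R) :=
    LinearMap.lTensor (mTilde 𝔪) (R.mkQ.comp (LinearMap.inr V V (BB 𝔪 B'))) with hF
  have hFsplit : F = (LinearMap.lTensor (mTilde 𝔪) R.mkQ).comp
      (LinearMap.lTensor (mTilde 𝔪) (LinearMap.inr V V (BB 𝔪 B'))) := by
    rw [hF, LinearMap.lTensor_comp]
  -- the canonical map a ↦ a ⊗ 1
  set oneB : mTilde 𝔪 →ₗ[V] BB 𝔪 B' :=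
    (TensorProduct.mk V (mTilde 𝔪) B').flip 1 with honeB
  have hneg : ∀ a : mTilde 𝔪, negIotaMap 𝔪 B' a = - oneB a := by
    intro a
    show a ⊗ₜ[V] (-1 : B') = -(a ⊗ₜ[V] (1 : B'))
    rw [← TensorProduct.tmul_neg]
  -- the retraction ingredients
  set h : mTilde 𝔪 →ₗ[V] mTilde 𝔪 ⊗[V] BB 𝔪 B' :=
    (LinearMap.lTensor (mTilde 𝔪) oneB).comp (deltaMap 𝔪 hm) with hh'
  have hh : ∀ a x : mTilde 𝔪, h ((nuMap 𝔪 a) • x) = x ⊗ₜ[V] oneB a := by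
    intro a x
    show LinearMap.lTensor (mTilde 𝔪) oneB (deltaMap 𝔪 hm ((nuMap 𝔪 a) • x)) = _
    rw [deltaMap_prop 𝔪 hm, LinearMap.lTensor_tmul]
  set g : mTilde 𝔪 ⊗[V] (V × BB 𝔪 B') →ₗ[V] mTilde 𝔪 ⊗[V] BB 𝔪 B' :=
    h.comp ((TensorProduct.rid V (mTilde 𝔪)).toLinearMap.comp
      (LinearMap.lTensor (mTilde 𝔪) (LinearMap.fst V V (BB 𝔪 B'))))
    + LinearMap.lTensor (mTilde 𝔪) (LinearMap.snd V V (BB 𝔪 B')) with hg'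
  have hgtmul : ∀ (x : mTilde 𝔪) (v : V) (b : BB 𝔪 B'),
      g (x ⊗ₜ[V] ((v, b) : V × BB 𝔪 B')) = h (v • x) + x ⊗ₜ[V] b := by
    intro x v b
    show h ((TensorProduct.rid V (mTilde 𝔪))
        (LinearMap.lTensor (mTilde 𝔪) (LinearMap.fst V V (BB 𝔪 B')) (x ⊗ₜ[V] (v, b))))
      + LinearMap.lTensor (mTilde 𝔪) (LinearMap.snd V V (BB 𝔪 B')) (x ⊗ₜ[V] (v, b)) = _
    rw [LinearMap.lTensor_tmul, LinearMap.lTensor_tmul]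
    rw [show (LinearMap.fst V V (BB 𝔪 B')) ((v, b) : V × BB 𝔪 B') = v from rfl,
      show (LinearMap.snd V V (BB 𝔪 B')) ((v, b) : V × BB 𝔪 B') = b from rfl,
      TensorProduct.rid_tmul]
  have hg2 : ∀ (x a : mTilde 𝔪), g (x ⊗ₜ[V] (dMap 𝔪 B' a)) = 0 := by
    intro x a
    rw [show dMap 𝔪 B' a = ((nuMap 𝔪 a, negIotaMap 𝔪 B' a) : V × BB 𝔪 B') from rfl,
      hgtmul, hh, hneg, TensorProduct.tmul_neg]
    exact add_neg_cancel (x ⊗ₜ[V] oneB a)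
  -- g is a retraction of lTensor inr
  have hginr : ∀ u : mTilde 𝔪 ⊗[V] BB 𝔪 B',
      g (LinearMap.lTensor (mTilde 𝔪) (LinearMap.inr V V (BB 𝔪 B')) u) = u := by
    intro u
    induction u using TensorProduct.induction_on with
    | zero => rw [map_zero, map_zero]
    | tmul x b =>
        rw [LinearMap.lTensor_tmul,
          show (LinearMap.inr V V (BB 𝔪 B')) b = ((0, b) : V × BB 𝔪 B') from rfl,
          hgtmul, zero_smul, map_zero, zero_add]
    | add u v hu hv => rw [map_add, map_add, hu, hv]
  have hgsub : ∀ t : mTilde 𝔪 ⊗[V] ↥R,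
      g (LinearMap.lTensor (mTilde 𝔪) R.subtype t) = 0 := by
    intro t
    induction t using TensorProduct.induction_on with
    | zero => rw [map_zero, map_zero]
    | tmul x w =>
        obtain ⟨a, ha⟩ := w.2
        rw [LinearMap.lTensor_tmul,
          show R.subtype w = (w : V × BB 𝔪 B') from rfl, ← ha]
        exact hg2 x a
    | add u v hu hv => rw [map_add, map_add, hu, hv, add_zero]
  constructor
  · -- injectivity
    intro u v huv
    have h0 : LinearMap.lTensor (mTilde 𝔪) (LinearMap.inr V V (BB 𝔪 B')) (u - v)
        ∈ LinearMap.ker (LinearMap.lTensor (mTilde 𝔪) R.mkQ) := by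
      rw [LinearMap.mem_ker]
      have hz : F (u - v) = 0 := by rw [map_sub, huv, sub_self]
      rw [hFsplit] at hz
      exact hz
    rw [lTensor_mkQ] at h0
    obtain ⟨t, ht⟩ := h0
    have h1 : u - v =
        g (LinearMap.lTensor (mTilde 𝔪) (LinearMap.inr V V (BB 𝔪 B')) (u - v)) :=
      (hginr _).symm
    rw [← ht, hgsub] at h1
    exact sub_eq_zero.mp h1
  · -- surjectivity
    have key : ∀ y' : mTilde 𝔪,
        LinearMap.lTensor (mTilde 𝔪) R.mkQ (y' ⊗ₜ[V] (((1 : V), (0 : BB 𝔪 B')) : V × BB 𝔪 B'))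
          ∈ LinearMap.range F := by
      intro y'
      have h1 := Submodule.mem_map_of_mem
        (f := (LinearMap.lTensor (mTilde 𝔪) R.mkQ).comp
          ((TensorProduct.mk V (mTilde 𝔪) (V × BB 𝔪 B')).flip
            (((1 : V), (0 : BB 𝔪 B')) : V × BB 𝔪 B')))
        (mem_span_nusmul 𝔪 hm y')
      rw [Submodule.map_span] at h1
      refine Submodule.span_le.mpr ?_ h1
      rintro _ ⟨w, ⟨a, x', rfl⟩, rfl⟩
      rw [SetLike.mem_coe, LinearMap.comp_apply]
      have e1 : ((TensorProduct.mk V (mTilde 𝔪) (V × BB 𝔪 B')).flip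
          (((1 : V), (0 : BB 𝔪 B')) : V × BB 𝔪 B')) ((nuMap 𝔪 a) • x')
          = x' ⊗ₜ[V] ((nuMap 𝔪 a) • (((1 : V), (0 : BB 𝔪 B')) : V × BB 𝔪 B')) := by
        rw [map_smul]
        exact (TensorProduct.tmul_smul _ _ _).symm
      rw [e1]
      have e2 : (nuMap 𝔪 a) • (((1 : V), (0 : BB 𝔪 B')) : V × BB 𝔪 B')
          = dMap 𝔪 B' a + ((0 : V), oneB a) := by
        have : dMap 𝔪 B' a = ((nuMap 𝔪 a, negIotaMap 𝔪 B' a) : V × BB 𝔪 B') := rfl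
        rw [this, hneg]
        refine Prod.ext ?_ ?_
        · show nuMap 𝔪 a * 1 = nuMap 𝔪 a + 0
          rw [mul_one, add_zero]
        · show (nuMap 𝔪 a) • (0 : BB 𝔪 B') = - oneB a + oneB a
          rw [smul_zero, neg_add_cancel]
      rw [e2, TensorProduct.tmul_add, map_add]
      refine add_mem ?_ ?_
      · have e3 : LinearMap.lTensor (mTilde 𝔪) R.mkQ (x' ⊗ₜ[V] (dMap 𝔪 B' a)) = 0 := by
          rw [LinearMap.lTensor_tmul]
          have : R.mkQ (dMap 𝔪 B' a) = 0 := by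
            rw [Submodule.mkQ_apply]
            exact (Submodule.Quotient.mk_eq_zero R).mpr (LinearMap.mem_range_self _ a)
          rw [this, TensorProduct.tmul_zero]
        rw [e3]
        exact zero_mem _
      · refine ⟨x' ⊗ₜ[V] oneB a, ?_⟩
        rw [hFsplit, LinearMap.comp_apply, LinearMap.lTensor_tmul]
        rfl
    intro u
    obtain ⟨y, rfl⟩ := LinearMap.lTensor_surjective (mTilde 𝔪)
      (Submodule.mkQ_surjective R) u
    suffices hY : LinearMap.lTensor (mTilde 𝔪) R.mkQ y ∈ LinearMap.range F by
      obtain ⟨z, hz⟩ := hY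
      exact ⟨z, hz⟩
    induction y using TensorProduct.induction_on with
    | zero => rw [map_zero]; exact zero_mem _
    | add y1 y2 h1 h2 => rw [map_add]; exact add_mem h1 h2
    | tmul x vb =>
        obtain ⟨v, b⟩ := vb
        have hsplit : ((v, b) : V × BB 𝔪 B')
            = ((0, b) : V × BB 𝔪 B') + v • (((1 : V), (0 : BB 𝔪 B')) : V × BB 𝔪 B') := by
          refine Prod.ext ?_ ?_
          · show v = 0 + v * 1
            rw [zero_add, mul_one]
          · show b = b + v • (0 : BB 𝔪 B')
            rw [smul_zero, add_zero]
        rw [hsplit, TensorProduct.tmul_add, map_add]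
        refine add_mem ?_ ?_
        · refine ⟨x ⊗ₜ[V] b, ?_⟩
          rw [hFsplit, LinearMap.comp_apply, LinearMap.lTensor_tmul]
          rfl
        · rw [TensorProduct.tmul_smul, map_smul]
          exact Submodule.smul_mem _ v (key x)
end
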